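/- arXiv:2003.07821 — 2 statements merged into one kernel-verified Lean document; each statement's English description precedes it below -/
import Mathlib

section
/- For each ℓ ∈ P and m ∈ 𝓜, the quantity 1 − π^(ℓ,m)(ε) is O(ε): there exists a finite constant K, independent of ε, such that 1 − π^(ℓ,m)(ε) ≤ K·ε for all ε ∈ (0,1). -/
/-!
Fix a tight constraint `ℓ` and write `B m` for the largest value of `⟪c ℓ, ·⟫` on `𝒮^m`.
Since `ν` maximises `⟪c ℓ, ·⟫` over the capacity region, `∑ ψ_m B m = ⟪c ℓ, ν⟫`.
In steady state `𝔼⟪c ℓ, q⁺⟫ = 𝔼⟪c ℓ, q⟫`, while `q⁺ ≥ q + a - s` and `c ℓ ≥ 0`;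
hence the mean service `𝔼⟪c ℓ, s⟫` is at least the mean arrival
`(1 - ε)⟪c ℓ, ν⟫`. On the other hand, whenever the state is `m` and the schedule misses `B m`,
it misses it by at least the positive gap `δ` between `B m` and the next value on the finite
set `𝒮^m`, so `𝔼⟪c ℓ, s⟫ ≤ ⟪c ℓ, ν⟫ - δ ψ_m (1 - π)`. Together, `1 - π ≤ ⟪c ℓ, ν⟫ ε / (δ ψ_m)`.
-/

open MeasureTheory ProbabilityTheory Pointwise
open scoped RealInnerProductSpace

noncomputable section

/-- The capacity region `𝒞 = ∑_m ψ_m · ConvexHull(𝒮^m)` (Minkowski sum). -/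
def capacityRegion {n : ℕ} {M : Type} [Fintype M] (ψ : M → ℝ)
    (S : M → Finset (EuclideanSpace ℝ (Fin n))) : Set (EuclideanSpace ℝ (Fin n)) :=
  ∑ m : M, ψ m • (convexHull ℝ (↑(S m) : Set (EuclideanSpace ℝ (Fin n))))

/-- `b^(ℓ,m) = max_{x ∈ 𝒮^m} ⟪c^(ℓ), x⟫`. -/
def maxRate {n : ℕ} {M : Type} (S : M → Finset (EuclideanSpace ℝ (Fin n)))
    (hSne : ∀ m, (S m).Nonempty) (cvec : EuclideanSpace ℝ (Fin n)) (m : M) : ℝ :=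
  (S m).sup' (hSne m) fun x => ⟪cvec, x⟫

lemma Finset.exists_pos_forall_lt_imp_le_sub {α : Type*} (s : Finset α) (f : α → ℝ) (t : ℝ) :
    ∃ δ > 0, ∀ x ∈ s, f x < t → f x ≤ t - δ := by
  classical
  obtain hemp | hne := (s.filter (f · < t)).eq_empty_or_nonempty
  · refine ⟨1, one_pos, fun x hx hxt => ?_⟩
    have hx' : x ∈ s.filter (f · < t) := Finset.mem_filter.2 ⟨hx, hxt⟩
    simp [hemp] at hx'
  · obtain ⟨x₀, hx₀, hmax⟩ := Finset.exists_max_image _ f hne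
    refine ⟨t - f x₀, sub_pos.2 (Finset.mem_filter.1 hx₀).2, fun x hx hxt => ?_⟩
    simp [hmax x (Finset.mem_filter.2 ⟨hx, hxt⟩)]

lemma EuclideanSpace.inner_le_inner_of_le {ι : Type*} [Fintype ι] {c x y : EuclideanSpace ℝ ι}
    (hc : ∀ i, 0 ≤ c i) (hxy : ∀ i, x i ≤ y i) : ⟪c, x⟫ ≤ ⟪c, y⟫ := by
  simp only [PiLp.inner_apply, RCLike.inner_apply, conj_trivial]
  exact Finset.sum_le_sum fun i _ => mul_le_mul_of_nonneg_right (hxy i) (hc i)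

section MaxRate

variable {n : ℕ} {M : Type} (S : M → Finset (EuclideanSpace ℝ (Fin n)))
  (hSne : ∀ m, (S m).Nonempty) (c : EuclideanSpace ℝ (Fin n))

lemma inner_le_maxRate {m : M} {x : EuclideanSpace ℝ (Fin n)} (hx : x ∈ S m) :
    ⟪c, x⟫ ≤ maxRate S hSne c m :=
  Finset.le_sup' (fun x => ⟪c, x⟫) hx

lemma inner_le_maxRate_of_mem_convexHull {m : M} {y : EuclideanSpace ℝ (Fin n)}
    (hy : y ∈ convexHull ℝ (S m : Set (EuclideanSpace ℝ (Fin n)))) :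
    ⟪c, y⟫ ≤ maxRate S hSne c m :=
  convexHull_min (fun _ hx => inner_le_maxRate S hSne c hx)
    (convex_halfSpace_le (innerₛₗ ℝ c).isLinear _) hy

variable [Fintype M] {ψ : M → ℝ}

lemma inner_le_sum_mul_maxRate (hψ : ∀ m, 0 ≤ ψ m) {x : EuclideanSpace ℝ (Fin n)}
    (hx : x ∈ capacityRegion ψ S) : ⟪c, x⟫ ≤ ∑ m, ψ m * maxRate S hSne c m := by
  obtain ⟨g, hg, rfl⟩ := (Set.mem_fintype_sum _ _).1 hx
  rw [inner_sum]
  refine Finset.sum_le_sum fun m _ => ?_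
  obtain ⟨y, hy, hyg⟩ := hg m
  rw [← hyg, real_inner_smul_right]
  exact mul_le_mul_of_nonneg_left (inner_le_maxRate_of_mem_convexHull S hSne c hy) (hψ m)

lemma exists_mem_capacityRegion_inner_eq_sum_mul_maxRate :
    ∃ x ∈ capacityRegion ψ S, ⟪c, x⟫ = ∑ m, ψ m * maxRate S hSne c m := by
  choose x hxS hx using fun m => Finset.exists_mem_eq_sup' (hSne m) fun x => ⟪c, x⟫
  refine ⟨∑ m, ψ m • x m, Set.finsetSum_mem_finsetSum _ _ _ fun m _ =>
    Set.smul_mem_smul_set (subset_convexHull ℝ _ (hxS m)), ?_⟩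
  simp only [inner_sum, real_inner_smul_right, maxRate, hx]

lemma sum_mul_maxRate_eq_of_isMaxOn (hψ : ∀ m, 0 ≤ ψ m) {ν : EuclideanSpace ℝ (Fin n)}
    (hν : ν ∈ capacityRegion ψ S) (hmax : IsMaxOn (fun x => ⟪c, x⟫) (capacityRegion ψ S) ν) :
    ∑ m, ψ m * maxRate S hSne c m = ⟪c, ν⟫ := by
  obtain ⟨x, hx, hxeq⟩ := exists_mem_capacityRegion_inner_eq_sum_mul_maxRate S hSne c (ψ := ψ)
  exact le_antisymm (hxeq ▸ hmax hx) (inner_le_sum_mul_maxRate S hSne c hψ hν)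

end MaxRate

section Probability

variable {Ω : Type*} [MeasurableSpace Ω] {μ : Measure Ω}

lemma MeasureTheory.Integrable.of_forall_mem_isBounded [IsFiniteMeasure μ] {E : Type*}
    [NormedAddCommGroup E] {f : Ω → E} (hf : AEStronglyMeasurable f μ) {T : Set E}
    (hT : Bornology.IsBounded T) (hfT : ∀ ω, f ω ∈ T) : Integrable f μ := by
  obtain ⟨C, hC⟩ := isBounded_iff_forall_norm_le.1 hT
  exact .of_bound hf C (ae_of_all _ fun ω => hC _ (hfT ω))

lemma integral_inner_eq_of_integral_apply {ι : Type*} [Fintype ι]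
    {a : Ω → EuclideanSpace ℝ ι} {v : EuclideanSpace ℝ ι}
    (ha : ∀ i, Integrable (fun ω => a ω i) μ) (hmean : ∀ i, ∫ ω, a ω i ∂μ = v i)
    (c : EuclideanSpace ℝ ι) : ∫ ω, ⟪c, a ω⟫ ∂μ = ⟪c, v⟫ := by
  rw [integral_inner (Integrable.of_eval_piLp ha)]
  congr 1
  ext i
  rw [eval_integral_piLp ha, hmean]

lemma integral_le_integral_of_identDistrib_of_le {β : Type*} [MeasurableSpace β] {X Y : Ω → β}
    {φ : β → ℝ} {u v : Ω → ℝ} (hXY : IdentDistrib Y X μ μ) (hφ : Measurable φ)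
    (hφX : Integrable (fun ω => φ (X ω)) μ) (hu : Integrable u μ) (hv : Integrable v μ)
    (hle : ∀ ω, φ (X ω) + u ω - v ω ≤ φ (Y ω)) : ∫ ω, u ω ∂μ ≤ ∫ ω, v ω ∂μ := by
  have hφXY := hXY.comp hφ
  have hφY : Integrable (fun ω => φ (Y ω)) μ := hφXY.integrable_iff.2 hφX
  have hφXu : Integrable (fun ω => φ (X ω) + u ω) μ := hφX.add hu
  have hmono := integral_mono (hφXu.sub hv) hφY hle
  simp only [Pi.sub_apply] at hmono
  rw [integral_sub hφXu hv, integral_add hφX hu] at hmono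
  have hφeq : ∫ ω, φ (Y ω) ∂μ = ∫ ω, φ (X ω) ∂μ := hφXY.integral_eq
  linarith

lemma integral_inner_le_of_identDistrib_max_add_sub {ι : Type*} [Fintype ι]
    {c : EuclideanSpace ℝ ι} (hc : ∀ i, 0 ≤ c i) {q q' a s : Ω → EuclideanSpace ℝ ι}
    (hq : Integrable q μ) (ha : Integrable a μ) (hs : Integrable s μ)
    (hqq' : IdentDistrib q' q μ μ) (hq' : ∀ ω i, q' ω i = max (q ω i + a ω i - s ω i) 0) :
    ∫ ω, ⟪c, a ω⟫ ∂μ ≤ ∫ ω, ⟪c, s ω⟫ ∂μ := by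
  refine integral_le_integral_of_identDistrib_of_le hqq'
    (continuous_const.inner continuous_id).measurable (hq.const_inner c) (ha.const_inner c)
    (hs.const_inner c) fun ω => ?_
  rw [← inner_add_right, ← inner_sub_right]
  exact EuclideanSpace.inner_le_inner_of_le hc fun i => by simp [hq']

lemma integral_le_integral_sub_mul_measureReal [IsFiniteMeasure μ] {f g : Ω → ℝ} {s : Set Ω}
    {δ : ℝ} (hf : Integrable f μ) (hg : Integrable g μ) (hs : MeasurableSet s)
    (hle : ∀ ω, f ω ≤ g ω) (hgap : ∀ ω ∈ s, f ω ≤ g ω - δ) :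
    ∫ ω, f ω ∂μ ≤ ∫ ω, g ω ∂μ - δ * μ.real s := by
  have hind : Integrable (s.indicator fun _ => δ) μ := (integrable_const δ).indicator hs
  have hpt : ∀ ω, f ω ≤ g ω - s.indicator (fun _ => δ) ω := fun ω => by
    by_cases hω : ω ∈ s
    · simpa [hω] using hgap ω hω
    · simpa [hω] using hle ω
  have hmono := integral_mono hf (hg.sub hind) hpt
  simp only [Pi.sub_apply] at hmono
  rwa [integral_sub hg hind, integral_indicator_const δ hs, smul_eq_mul, mul_comm] at hmono

lemma integral_comp_eq_sum_of_measure_preimage {M : Type*} [Fintype M] [MeasurableSpace M]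
    [MeasurableSingletonClass M] [IsFiniteMeasure μ] {Z : Ω → M} (hZ : Measurable Z)
    {ψ : M → ℝ} (hψ : ∀ m, 0 ≤ ψ m) (hlaw : ∀ m, μ {ω | Z ω = m} = ENNReal.ofReal (ψ m))
    (f : M → ℝ) : ∫ ω, f (Z ω) ∂μ = ∑ m, ψ m * f m := by
  rw [← integral_map hZ.aemeasurable (measurable_of_finite f).aestronglyMeasurable,
    integral_fintype (Integrable.of_finite)]
  refine Finset.sum_congr rfl fun m _ => ?_
  rw [measureReal_def, Measure.map_apply hZ (measurableSet_singleton m)]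
  simp [Set.preimage, hlaw, hψ m]

lemma one_sub_toReal_cond_eq [IsFiniteMeasure μ] {s t : Set Ω} {p : ℝ}
    (hμs : μ s = ENNReal.ofReal p) (hp : 0 < p) (hs : MeasurableSet s) (ht : MeasurableSet t) :
    1 - (μ[t|s]).toReal = μ.real (s \ t) / p := by
  have := cond_isProbabilityMeasure (μ := μ) (by simp [hμs, hp] : μ s ≠ 0)
  rw [← measureReal_def, ← probReal_compl_eq_one_sub ht, measureReal_def, cond_apply hs,
    ENNReal.toReal_mul, ENNReal.toReal_inv, ← Set.sdiff_eq, inv_mul_eq_div, hμs,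
    ENNReal.toReal_ofReal hp.le, measureReal_def]

lemma ProbabilityTheory.IdentDistrib.of_map_eq [IsProbabilityMeasure μ] {β : Type*}
    [MeasurableSpace β] {X Y : Ω → β} (hX : AEMeasurable X μ) (h : μ.map Y = μ.map X) :
    IdentDistrib Y X μ μ := by
  have := Measure.isProbabilityMeasure_map hX
  exact ⟨.of_map_ne_zero (h ▸ IsProbabilityMeasure.ne_zero _), hX, h⟩

lemma integrable_of_forall_mem_finset [IsFiniteMeasure μ] {E M : Type*} [NormedAddCommGroup E]
    [Finite M] {S : M → Finset E} {Z : Ω → M} {s : Ω → E} (hs : AEStronglyMeasurable s μ)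
    (hsS : ∀ ω, s ω ∈ S (Z ω)) : Integrable s μ :=
  .of_forall_mem_isBounded hs (Set.finite_iUnion fun m => (S m).finite_toSet).isBounded
    fun ω => Set.mem_iUnion.2 ⟨_, hsS ω⟩

end Probability

lemma integral_inner_le_sum_mul_maxRate_sub {n : ℕ} {M : Type} [Fintype M] [MeasurableSpace M]
    [MeasurableSingletonClass M] (S : M → Finset (EuclideanSpace ℝ (Fin n)))
    (hSne : ∀ m, (S m).Nonempty) (c : EuclideanSpace ℝ (Fin n)) {Ω : Type*} [MeasurableSpace Ω]
    {μ : Measure Ω} [IsFiniteMeasure μ] {ψ : M → ℝ} (hψ : ∀ m, 0 ≤ ψ m) {Z : Ω → M}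
    (hZ : Measurable Z) (hlaw : ∀ m, μ {ω | Z ω = m} = ENNReal.ofReal (ψ m))
    {s : Ω → EuclideanSpace ℝ (Fin n)} (hs : Measurable s) (hsS : ∀ ω, s ω ∈ S (Z ω))
    {m : M} {δ : ℝ}
    (hgap : ∀ x ∈ S m, ⟪c, x⟫ < maxRate S hSne c m → ⟪c, x⟫ ≤ maxRate S hSne c m - δ) :
    ∫ ω, ⟪c, s ω⟫ ∂μ ≤ ∑ m', ψ m' * maxRate S hSne c m'
      - δ * μ.real ({ω | Z ω = m} \ {ω | ⟪c, s ω⟫ = maxRate S hSne c m}) := by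
  set B := maxRate S hSne c
  have hB_int : Integrable (fun ω => B (Z ω)) μ :=
    .of_forall_mem_isBounded ((measurable_of_finite B).comp hZ).aestronglyMeasurable
      (Set.finite_range B).isBounded fun ω => ⟨_, rfl⟩
  have hmax_m : MeasurableSet {ω | ⟪c, s ω⟫ = B m} :=
    measurableSet_eq_fun (by fun_prop) measurable_const
  have hs_int : Integrable s μ := integrable_of_forall_mem_finset hs.aestronglyMeasurable hsS
  rw [← integral_comp_eq_sum_of_measure_preimage hZ hψ hlaw]
  refine integral_le_integral_sub_mul_measureReal (hs_int.const_inner c) hB_int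
    ((hZ (measurableSet_singleton m)).diff hmax_m) (fun ω => inner_le_maxRate S hSne c (hsS ω))
    fun ω ⟨(hωm : Z ω = m), hωB⟩ => ?_
  have hsm : s ω ∈ S m := hωm ▸ hsS ω
  rw [hωm]
  exact hgap _ hsm (lt_of_le_of_ne (inner_le_maxRate S hSne c hsm) hωB)

theorem generalized_switch_schedule_prob_O_eps_general
    -- fixed data of the generalized switch
    (n : ℕ)
    (M : Type) [Fintype M] [MeasurableSpace M] [MeasurableSingletonClass M]
    (ψ : M → ℝ) (hψpos : ∀ m, 0 < ψ m)
    (Amax : ℝ)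
    (S : M → Finset (EuclideanSpace ℝ (Fin n)))
    (hSne : ∀ m, (S m).Nonempty)
    -- the capacity region as an intersection of half spaces
    (L : ℕ) (c : Fin L → EuclideanSpace ℝ (Fin n)) (b : Fin L → ℝ)
    (hcnonneg : ∀ ℓ i, 0 ≤ c ℓ i)
    (hcap : capacityRegion ψ S
      = {x : EuclideanSpace ℝ (Fin n) | (∀ i, 0 ≤ x i) ∧ ∀ ℓ, ⟪c ℓ, x⟫ ≤ b ℓ})
    -- the heavy-traffic direction ν on the boundary, and the set P of tight constraints
    (ν : EuclideanSpace ℝ (Fin n)) (hν : ν ∈ capacityRegion ψ S)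
    (P : Finset (Fin L)) (hPmem : ∀ ℓ, ℓ ∈ P ↔ ⟪c ℓ, ν⟫ = b ℓ)
    -- a MaxWeight schedule
    (sched : EuclideanSpace ℝ (Fin n) → M → EuclideanSpace ℝ (Fin n))
    (hsched_meas : Measurable (fun p : EuclideanSpace ℝ (Fin n) × M => sched p.1 p.2))
    (hsched_mem : ∀ q m, sched q m ∈ S m) :
    -- conclusion
    ∀ ℓ ∈ P, ∀ m : M, ∃ K : ℝ,
      ∀ ε : ℝ, 0 < ε → ε < 1 →
      ∀ (Ω : Type) [MeasureSpace Ω], IsProbabilityMeasure (ℙ : Measure Ω) →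
      ∀ (a : Ω → EuclideanSpace ℝ (Fin n)) (Mc : Ω → M)
        (q qp : Ω → EuclideanSpace ℝ (Fin n)),
        Measurable a → Measurable Mc → Measurable q →
        (∀ ω i, a ω i ∈ Set.Icc (0:ℝ) Amax) →
        (∀ i, (∫ ω, a ω i) = (1 - ε) * ν i) →
        (∀ m', (ℙ : Measure Ω) {ω | Mc ω = m'} = ENNReal.ofReal (ψ m')) →
        IndepFun (fun ω => (a ω, Mc ω)) q ℙ →
        (∀ ω i, 0 ≤ q ω i) →
        Integrable (fun ω => ‖q ω‖ ^ 2) →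
        (∀ ω i, qp ω i = max (q ω i + a ω i - sched (q ω) (Mc ω) i) 0) →
        Measure.map qp ℙ = Measure.map q ℙ →
        -- 1 − π^(ℓ,m)(ε) ≤ K·ε, where π^(ℓ,m)(ε) is a conditional probability
        1 - ((ProbabilityTheory.cond (ℙ : Measure Ω) {ω | Mc ω = m})
              {ω | ⟪c ℓ, sched (q ω) (Mc ω)⟫ = maxRate S hSne (c ℓ) m}).toReal
          ≤ K * ε := by
  intro ℓ hℓ m
  set B := maxRate S hSne (c ℓ)
  have hsumB : ∑ m', ψ m' * B m' = ⟪c ℓ, ν⟫ :=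
    sum_mul_maxRate_eq_of_isMaxOn S hSne (c ℓ) (fun m' => (hψpos m').le) hν fun x hx => by
      rw [hcap] at hx
      exact (hx.2 ℓ).trans ((hPmem ℓ).1 hℓ).ge
  obtain ⟨δ, hδ, hgap⟩ := Finset.exists_pos_forall_lt_imp_le_sub (S m) (⟪c ℓ, ·⟫) (B m)
  refine ⟨⟪c ℓ, ν⟫ / (δ * ψ m), fun ε hε _ Ω _ _ a Mc q qp ha hMc hq haIcc haMean hMcLaw _ _
    hqInt hqp hstat => ?_⟩
  have hs_meas : Measurable fun ω => sched (q ω) (Mc ω) := hsched_meas.comp (hq.prodMk hMc)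
  have ha_int : ∀ i, Integrable (fun ω => a ω i) := fun i =>
    .of_forall_mem_isBounded (by fun_prop) (Metric.isBounded_Icc _ _) (haIcc · i)
  have hq_int : Integrable q :=
    ((memLp_two_iff_integrable_sq_norm hq.aestronglyMeasurable).2 hqInt).integrable one_le_two
  have hlow : (1 - ε) * ⟪c ℓ, ν⟫ ≤ ∫ ω, ⟪c ℓ, sched (q ω) (Mc ω)⟫ := by
    calc (1 - ε) * ⟪c ℓ, ν⟫ = ∫ ω, ⟪c ℓ, a ω⟫ := by
          rw [integral_inner_eq_of_integral_apply ha_int (v := (1 - ε) • ν) (by simpa using haMean),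
            real_inner_smul_right]
      _ ≤ _ := integral_inner_le_of_identDistrib_max_add_sub (hcnonneg ℓ) hq_int
          (Integrable.of_eval_piLp ha_int)
          (integrable_of_forall_mem_finset hs_meas.aestronglyMeasurable fun ω => hsched_mem _ _)
          (.of_map_eq hq.aemeasurable hstat) hqp
  have hup := integral_inner_le_sum_mul_maxRate_sub S hSne (c ℓ) (μ := ℙ)
    (fun m' => (hψpos m').le) hMc hMcLaw hs_meas (fun ω => hsched_mem _ _) hgap
  rw [hsumB] at hup
  rw [one_sub_toReal_cond_eq (hMcLaw m) (hψpos m) (hMc (measurableSet_singleton m)) ?_]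
  · calc _ ≤ ε * ⟪c ℓ, ν⟫ / δ / ψ m :=
          div_le_div_of_nonneg_right (by rw [le_div_iff₀ hδ]; linarith) (hψpos m).le
      _ = ⟪c ℓ, ν⟫ / (δ * ψ m) * ε := by ring
  · exact measurableSet_eq_fun (by fun_prop) measurable_const

/-- for every `ℓ ∈ P` and `m ∈ 𝓜`, the conditional probability that the
MaxWeight schedule does not achieve the maximal `c^(ℓ)`-weighted rate given channel state `m`
is `O(ε)`, with a constant independent of `ε`. -/
theorem generalized_switch_schedule_prob_O_eps
    -- fixed data of the generalized switch
    (n : ℕ) (hn : 0 < n)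
    (M : Type) [Fintype M] [Nonempty M] [MeasurableSpace M] [MeasurableSingletonClass M]
    (ψ : M → ℝ) (hψpos : ∀ m, 0 < ψ m) (hψsum : ∑ m, ψ m = 1)
    (Amax Smax : ℝ)
    (S : M → Finset (EuclideanSpace ℝ (Fin n)))
    (hSne : ∀ m, (S m).Nonempty)
    (hSnonneg : ∀ m, ∀ x ∈ S m, ∀ i, 0 ≤ x i)
    (hSbdd : ∀ m, ∀ x ∈ S m, ∀ i, x i ≤ Smax)
    (hSproj : ∀ m, ∀ x ∈ S m, ∀ T : Finset (Fin n),
      (WithLp.toLp 2 (fun i => if i ∈ T then x i else 0) : EuclideanSpace ℝ (Fin n)) ∈ S m)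
    -- the capacity region as an intersection of half spaces
    (L : ℕ) (c : Fin L → EuclideanSpace ℝ (Fin n)) (b : Fin L → ℝ)
    (hcnonneg : ∀ ℓ i, 0 ≤ c ℓ i) (hcnorm : ∀ ℓ, ‖c ℓ‖ = 1) (hbpos : ∀ ℓ, 0 < b ℓ)
    (hcap : capacityRegion ψ S
      = {x : EuclideanSpace ℝ (Fin n) | (∀ i, 0 ≤ x i) ∧ ∀ ℓ, ⟪c ℓ, x⟫ ≤ b ℓ})
    -- the heavy-traffic direction ν on the boundary, and the set P of tight constraints
    (ν : EuclideanSpace ℝ (Fin n)) (hν : ν ∈ capacityRegion ψ S)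
    (P : Finset (Fin L)) (hPmem : ∀ ℓ, ℓ ∈ P ↔ ⟪c ℓ, ν⟫ = b ℓ) (hPne : P.Nonempty)
    -- a MaxWeight schedule
    (sched : EuclideanSpace ℝ (Fin n) → M → EuclideanSpace ℝ (Fin n))
    (hsched_meas : Measurable (fun p : EuclideanSpace ℝ (Fin n) × M => sched p.1 p.2))
    (hsched_mem : ∀ q m, sched q m ∈ S m)
    (hsched_max : ∀ q m, ∀ x ∈ S m, ⟪q, x⟫ ≤ ⟪q, sched q m⟫) :
    -- conclusion
    ∀ ℓ ∈ P, ∀ m : M, ∃ K : ℝ,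
      ∀ ε : ℝ, 0 < ε → ε < 1 →
      ∀ (Ω : Type) [MeasureSpace Ω], IsProbabilityMeasure (ℙ : Measure Ω) →
      ∀ (a : Ω → EuclideanSpace ℝ (Fin n)) (Mc : Ω → M)
        (q qp : Ω → EuclideanSpace ℝ (Fin n)),
        Measurable a → Measurable Mc → Measurable q →
        (∀ ω i, a ω i ∈ Set.Icc (0:ℝ) Amax) →
        (∀ i, (∫ ω, a ω i) = (1 - ε) * ν i) →
        (∀ m', (ℙ : Measure Ω) {ω | Mc ω = m'} = ENNReal.ofReal (ψ m')) →
        IndepFun (fun ω => (a ω, Mc ω)) q ℙ →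
        (∀ ω i, 0 ≤ q ω i) →
        Integrable (fun ω => ‖q ω‖ ^ 2) →
        (∀ ω i, qp ω i = max (q ω i + a ω i - sched (q ω) (Mc ω) i) 0) →
        Measure.map qp ℙ = Measure.map q ℙ →
        -- 1 − π^(ℓ,m)(ε) ≤ K·ε, where π^(ℓ,m)(ε) is a conditional probability
        1 - ((ProbabilityTheory.cond (ℙ : Measure Ω) {ω | Mc ω = m})
              {ω | ⟪c ℓ, sched (q ω) (Mc ω)⟫ = maxRate S hSne (c ℓ) m}).toReal
          ≤ K * ε :=
  generalized_switch_schedule_prob_O_eps_general n M ψ hψpos Amax S hSne L c b hcnonneg hcap ν hν P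
    hPmem sched hsched_meas hsched_mem

end
end

section
/- For all real numbers A ≥ 0 and B ≥ 0 and every positive integer r: (A^r + B^r·r!)^{1/r} ≤ (A + B) · e^{(1/r) − 1} · r^{1 + 1/(2r)}. -/
/-!
Since `r! ≥ 1` and `A^r + B^r ≤ (A + B)^r`, the left side is at most `(A + B) (r!)^{1/r}`.
Stirling's sequence `n! / (√(2n) (n/e)^n)` decreases from its value `e / √2` at `n = 1`,
which gives `r! ≤ e^{1-r} r^{r+1/2}`; taking `r`-th roots finishes the proof.
-/

open Real Nat

theorem factorial_le_exp_one_sub_mul_rpow {n : ℕ} (hn : n ≠ 0) :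
    (n ! : ℝ) ≤ exp (1 - n) * (n : ℝ) ^ ((n : ℝ) + 1 / 2) := by
  have hn0 : (0 : ℝ) < n := by positivity
  have hseq : Stirling.stirlingSeq n ≤ exp 1 / √2 := by
    obtain ⟨m, rfl⟩ := exists_eq_succ_of_ne_zero hn
    simpa using Stirling.stirlingSeq'_antitone (zero_le m)
  have hden : 0 < √(2 * n : ℝ) * (n / exp 1) ^ n := by positivity
  calc (n ! : ℝ) = Stirling.stirlingSeq n * (√(2 * n : ℝ) * (n / exp 1) ^ n) := by
        rw [Stirling.stirlingSeq, div_mul_cancel₀ _ hden.ne']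
    _ ≤ exp 1 / √2 * (√(2 * n : ℝ) * (n / exp 1) ^ n) := by gcongr
    _ = exp (1 - n) * (n : ℝ) ^ ((n : ℝ) + 1 / 2) := by
        rw [rpow_add hn0, rpow_natCast, ← sqrt_eq_rpow, sqrt_mul zero_le_two, exp_sub,
          div_pow, ← exp_nat_mul, mul_one]
        field_simp

theorem factorial_rpow_inv_le {n : ℕ} (hn : n ≠ 0) :
    (n ! : ℝ) ^ ((1 : ℝ) / n) ≤ exp (1 / n - 1) * (n : ℝ) ^ ((1 : ℝ) + 1 / (2 * n)) := by
  have hn0 : (0 : ℝ) < n := by positivity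
  calc (n ! : ℝ) ^ ((1 : ℝ) / n)
        ≤ (exp (1 - n) * (n : ℝ) ^ ((n : ℝ) + 1 / 2)) ^ ((1 : ℝ) / n) := by
        gcongr
        exact factorial_le_exp_one_sub_mul_rpow hn
    _ = exp (1 / n - 1) * (n : ℝ) ^ ((1 : ℝ) + 1 / (2 * n)) := by
        rw [mul_rpow (exp_nonneg _) (by positivity), ← exp_mul, ← rpow_mul hn0.le]
        congr 2 <;> field_simp

theorem pow_add_pow_mul_le_add_pow_mul {a b c : ℝ} (ha : 0 ≤ a) (hb : 0 ≤ b) (hc : 1 ≤ c)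
    {n : ℕ} (hn : n ≠ 0) : a ^ n + b ^ n * c ≤ (a + b) ^ n * c := by
  calc a ^ n + b ^ n * c ≤ (a ^ n + b ^ n) * c := by nlinarith [pow_nonneg ha n]
    _ ≤ (a + b) ^ n * c := by gcongr; exact pow_add_pow_le ha hb hn

/-- for `A, B ≥ 0` and every positive integer `r`,
`(A^r + B^r · r!)^{1/r} ≤ (A + B) · e^{1/r − 1} · r^{1 + 1/(2r)}`. -/
theorem moment_combination_bound (A B : ℝ) (hA : 0 ≤ A) (hB : 0 ≤ B)
    (r : ℕ) (hr : 0 < r) :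
    (A ^ r + B ^ r * (r.factorial : ℝ)) ^ ((1:ℝ) / r)
      ≤ (A + B) * Real.exp (1 / r - 1) * (r : ℝ) ^ ((1:ℝ) + 1 / (2 * r)) := by
  have hr0 : r ≠ 0 := hr.ne'
  calc (A ^ r + B ^ r * (r ! : ℝ)) ^ ((1 : ℝ) / r)
        ≤ ((A + B) ^ r * r !) ^ ((1 : ℝ) / r) := by
        gcongr
        exact pow_add_pow_mul_le_add_pow_mul hA hB (mod_cast r.factorial_pos) hr0
    _ = (A + B) * (r ! : ℝ) ^ ((1 : ℝ) / r) := by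
        rw [mul_rpow (by positivity) (by positivity), one_div,
          pow_rpow_inv_natCast (by positivity) hr0]
    _ ≤ (A + B) * exp (1 / r - 1) * (r : ℝ) ^ ((1 : ℝ) + 1 / (2 * r)) := by
        rw [mul_assoc]
        gcongr
        exact factorial_rpow_inv_le hr0
end
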